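/- Fix a partition ξ' and partitions ζ, ζ' of the same integer such that both (ξ',ζ) and (ξ',ζ') yield u-symbols whose similarity classes have distinguished representatives with entry multisets γ and γ' (decreasingly ordered). Then γ_1 + ⋯ + γ_r ≤ γ'_1 + ⋯ + γ'_r for all r if and only if ζ ≤ ζ' in the dominance order. -/

import Mathlib

/-!
The entry multiset of the u-symbol of `(ξ', ζ)` is `A + B ζ`, where the top row `A` does not
depend on `ζ` and the bottom row `B ζ` is increasing, so the sum of its `t` largest entries is
`ζ₁ + ⋯ + ζ_t` plus a constant depending only on `k` and `t`. The `r` largest entries of `A + B ζ`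
split into the `s` largest of `A` and the `t` largest of `B ζ` for some `s + t ≤ r`, which gives
the implication from dominance of `ζ` by `ζ'` to dominance of the top sums. Conversely, for each
`t ≤ k` there is an `s` such that the `s + t` largest entries of `A + B ζ'` are exactly the `s`
largest of `A` and the `t` largest of `B ζ'`: cut `A` at the largest entry of `B ζ'` outside its
top `t`. Comparing with `A + B ζ` at level `s + t` isolates the top-`t` sums of the bottom rows.
-/

open Finset

/-- The multiset of entries of the u-symbol of (ξ,ζ) (with ξ of k+1 parts and
ζ of k parts). The distinguished representative of the similarity class of a
u-symbol has the same multiset of entries, so this multiset is also the entry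
multiset of the distinguished representative. -/
def usymbolEntries (k : ℕ) (ξ ζ : ℕ → ℕ) : Multiset ℕ :=
  (Multiset.range (k + 1)).map (fun i => ξ (k - i) + 2 * i) +
  (Multiset.range k).map (fun i => ζ (k - 1 - i) + 2 * i + 1)

/-- Sum of the r largest elements of a multiset of naturals. -/
def topSum (γ : Multiset ℕ) (r : ℕ) : ℕ :=
  ((γ.sort (· ≤ ·)).reverse.take r).sum

section TopSum

variable {γ S T : Multiset ℕ}

lemma Multiset.sum_le_sum_of_card_le_of_forall_le {P Q : Multiset ℕ}
    (hcard : Multiset.card P ≤ Multiset.card Q) (h : ∀ x ∈ P, ∀ y ∈ Q, x ≤ y) :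
    P.sum ≤ Q.sum :=
  calc P.sum ≤ Multiset.card P • P.sup := P.sum_le_card_nsmul _ fun _ => Multiset.le_sup
    _ ≤ Multiset.card Q • P.sup := Nat.mul_le_mul_right _ hcard
    _ ≤ Q.sum := Multiset.card_nsmul_le_sum fun y hy =>
      Multiset.sup_le.2 fun x hx => h x hx y hy

/- Exchange argument: the entries of `T - S` lie in `γ - S`, so each is at most every entry of
`S - T`, and there are no more of them. -/
lemma sum_le_sum_of_forall_le_of_le (hT : T ≤ γ)
    (hcard : Multiset.card T ≤ Multiset.card S) (hdom : ∀ x ∈ S, ∀ y ∈ γ - S, y ≤ x) :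
    T.sum ≤ S.sum := by
  classical
  have hcard' : Multiset.card (T - S) ≤ Multiset.card (S - T) := by
    have hT' := congrArg Multiset.card (Multiset.sub_add_inter T S)
    have hS' := congrArg Multiset.card (Multiset.sub_add_inter S T)
    rw [Multiset.card_add] at hT' hS'
    rw [Multiset.inter_comm] at hS'
    omega
  have hsub : T - S ≤ γ - S := tsub_le_tsub_right hT S
  have hle := Multiset.sum_le_sum_of_card_le_of_forall_le hcard' fun x hx y hy =>
    hdom y (Multiset.mem_of_le tsub_le_self hy) x (Multiset.mem_of_le hsub hx)
  have hT_sum : T.sum = (T - S).sum + (T ∩ S).sum := by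
    rw [← Multiset.sum_add, Multiset.sub_add_inter]
  have hS_sum : S.sum = (S - T).sum + (T ∩ S).sum := by
    rw [Multiset.inter_comm, ← Multiset.sum_add, Multiset.sub_add_inter]
  omega

def topPart (γ : Multiset ℕ) (r : ℕ) : Multiset ℕ :=
  ((γ.sort (· ≤ ·)).reverse.take r : List ℕ)

lemma sum_topPart (γ : Multiset ℕ) (r : ℕ) : (topPart γ r).sum = topSum γ r :=
  Multiset.sum_coe _

lemma topPart_le (γ : Multiset ℕ) (r : ℕ) : topPart γ r ≤ γ := by
  conv_rhs => rw [← Multiset.sort_eq γ (· ≤ ·), ← Multiset.coe_reverse]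
  exact Multiset.coe_le.2 (List.take_sublist _ _).subperm

lemma card_topPart (γ : Multiset ℕ) (r : ℕ) :
    Multiset.card (topPart γ r) = min r (Multiset.card γ) := by
  simp [topPart]

lemma le_of_mem_topPart {r x y : ℕ} (hx : x ∈ topPart γ r) (hy : y ∈ γ - topPart γ r) :
    y ≤ x := by
  set l := (γ.sort (· ≤ ·)).reverse
  have hγ : γ = topPart γ r + (l.drop r : Multiset ℕ) := by
    rw [topPart, Multiset.coe_add, List.take_append_drop, Multiset.coe_reverse,
      Multiset.sort_eq]
  have hl : (l.take r ++ l.drop r).Pairwise (fun a b => b ≤ a) := by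
    rw [List.take_append_drop, List.pairwise_reverse]
    exact Multiset.pairwise_sort _ _
  rw [tsub_eq_of_eq_add_rev hγ] at hy
  exact (List.pairwise_append.1 hl).2.2 x hx y hy

lemma topSum_eq_sum_of_forall_le (hS : S ≤ γ) (hdom : ∀ x ∈ S, ∀ y ∈ γ - S, y ≤ x) :
    topSum γ (Multiset.card S) = S.sum := by
  have hcard : Multiset.card (topPart γ (Multiset.card S)) = Multiset.card S := by
    rw [card_topPart, min_eq_left (Multiset.card_le_card hS)]
  rw [← sum_topPart]
  exact le_antisymm (sum_le_sum_of_forall_le_of_le (topPart_le _ _) hcard.le hdom)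
    (sum_le_sum_of_forall_le_of_le hS hcard.ge fun _ hx _ hy =>
      le_of_mem_topPart hx hy)

lemma sum_le_topSum {r : ℕ} (hS : S ≤ γ) (hr : Multiset.card S ≤ r) : S.sum ≤ topSum γ r := by
  rw [← sum_topPart]
  refine sum_le_sum_of_forall_le_of_le hS ?_ fun _ hx _ hy =>
    le_of_mem_topPart hx hy
  rw [card_topPart]
  exact le_min hr (Multiset.card_le_card hS)

lemma topSum_mono (γ : Multiset ℕ) {r r' : ℕ} (h : r ≤ r') : topSum γ r ≤ topSum γ r' := by
  rw [← sum_topPart]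
  exact sum_le_topSum (topPart_le _ _) ((card_topPart γ r).trans_le (min_le_left _ _) |>.trans h)

lemma topSum_add_le (M N : Multiset ℕ) (s t : ℕ) :
    topSum M s + topSum N t ≤ topSum (M + N) (s + t) := by
  rw [← sum_topPart, ← sum_topPart, ← Multiset.sum_add]
  refine sum_le_topSum (add_le_add (topPart_le M s) (topPart_le N t)) ?_
  rw [Multiset.card_add, card_topPart, card_topPart]
  omega

lemma exists_topSum_add_le (M N : Multiset ℕ) (r : ℕ) :
    ∃ s t, t ≤ Multiset.card N ∧ s + t ≤ r ∧ topSum (M + N) r ≤ topSum M s + topSum N t := by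
  classical
  set P := topPart (M + N) r
  have hP : P ≤ M + N := topPart_le _ _
  have hPN : P - M ≤ N := tsub_le_iff_left.2 hP
  refine ⟨Multiset.card (P ∩ M), Multiset.card (P - M), Multiset.card_le_card hPN, ?_, ?_⟩
  · rw [← Multiset.card_add, add_comm, Multiset.sub_add_inter, card_topPart]
    exact min_le_left _ _
  · have hsum : topSum (M + N) r = (P ∩ M).sum + (P - M).sum := by
      rw [← sum_topPart, ← Multiset.sum_add, add_comm (P ∩ M), Multiset.sub_add_inter]
    rw [hsum]
    exact add_le_add (sum_le_topSum Multiset.inter_le_right le_rfl) (sum_le_topSum hPN le_rfl)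

lemma exists_topSum_add_eq (M N : Multiset ℕ) {t : ℕ} (ht : t ≤ Multiset.card N) :
    ∃ s, topSum (M + N) (s + t) = topSum M s + topSum N t := by
  classical
  set P := topPart N t
  set β := (N - P).sup
  set Q := M.filter (β < ·)
  have hM : M = Q + M.filter (¬ β < ·) := (Multiset.filter_add_not _ M).symm
  have hN : N = P + (N - P) := (add_tsub_cancel_of_le (topPart_le N t)).symm
  have hlow : ∀ y ∈ M.filter (¬ β < ·) + (N - P), y ≤ β := by
    intro y hy
    rcases Multiset.mem_add.1 hy with hy | hy
    · exact not_lt.1 (Multiset.mem_filter.1 hy).2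
    · exact Multiset.le_sup hy
  have hhigh : ∀ x ∈ Q + P, β ≤ x := by
    intro x hx
    rcases Multiset.mem_add.1 hx with hx | hx
    · exact (Multiset.mem_filter.1 hx).2.le
    · exact Multiset.sup_le.2 fun y hy => le_of_mem_topPart hx hy
  have hQ : topSum M (Multiset.card Q) = Q.sum := by
    refine topSum_eq_sum_of_forall_le (Multiset.filter_le _ _) fun x hx y hy => ?_
    rw [Multiset.sub_filter_eq_filter_not] at hy
    exact (hlow y (Multiset.mem_add.2 (Or.inl hy))).trans
      (hhigh x (Multiset.mem_add.2 (Or.inl hx)))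
  have hQP : topSum (M + N) (Multiset.card (Q + P)) = (Q + P).sum := by
    refine topSum_eq_sum_of_forall_le (add_le_add (Multiset.filter_le _ _) (topPart_le N t))
      fun x hx y hy => (hlow y ?_).trans (hhigh x hx)
    rwa [hM, hN, add_add_add_comm, add_tsub_cancel_left] at hy
  refine ⟨Multiset.card Q, ?_⟩
  rwa [Multiset.card_add, card_topPart, min_eq_left ht, Multiset.sum_add, ← hQ,
    sum_topPart] at hQP

lemma topSum_map_range {f : ℕ → ℕ} (hf : Monotone f) (m r : ℕ) :
    topSum ((Multiset.range (m + r)).map f) r = ∑ i ∈ range r, f (m + i) := by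
  have hsplit : (Multiset.range (m + r)).map f =
      (Multiset.range m).map f + (Multiset.range r).map (fun i => f (m + i)) := by
    rw [Multiset.range_add, Multiset.map_add, Multiset.map_map]
    rfl
  have key := topSum_eq_sum_of_forall_le (γ := (Multiset.range (m + r)).map f)
    (S := (Multiset.range r).map (fun i => f (m + i)))
    (by rw [hsplit]; exact Multiset.le_add_left _ _) (by
      rw [hsplit, add_tsub_cancel_right]
      intro x hx y hy
      obtain ⟨i, -, rfl⟩ := Multiset.mem_map.1 hx
      obtain ⟨j, hj, rfl⟩ := Multiset.mem_map.1 hy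
      exact hf (by rw [Multiset.mem_range] at hj; omega))
  rwa [Multiset.card_map, Multiset.card_range] at key

end TopSum

def bottomRow (k : ℕ) (ζ : ℕ → ℕ) : Multiset ℕ :=
  (Multiset.range k).map (fun i => ζ (k - 1 - i) + 2 * i + 1)

lemma usymbolEntries_eq_add (k : ℕ) (ξ ζ : ℕ → ℕ) :
    usymbolEntries k ξ ζ =
      (Multiset.range (k + 1)).map (fun i => ξ (k - i) + 2 * i) + bottomRow k ζ :=
  rfl

lemma card_bottomRow (k : ℕ) (ζ : ℕ → ℕ) : Multiset.card (bottomRow k ζ) = k := by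
  simp [bottomRow]

lemma topSum_bottomRow {k t : ℕ} {ζ : ℕ → ℕ} (hζ : Antitone ζ) (ht : t ≤ k) :
    topSum (bottomRow k ζ) t = ∑ i ∈ range t, ζ i + ∑ i ∈ range t, (2 * (k - t + i) + 1) := by
  have hmono : Monotone fun i => ζ (k - 1 - i) + 2 * i + 1 := fun i j hij => by
    have := hζ (Nat.sub_le_sub_left hij (k - 1))
    dsimp only
    omega
  obtain ⟨m, rfl⟩ := Nat.exists_eq_add_of_le' ht
  rw [bottomRow, topSum_map_range hmono, ← Finset.sum_range_reflect ζ t,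
    ← Finset.sum_add_distrib]
  refine Finset.sum_congr rfl fun i hi => ?_
  rw [Finset.mem_range] at hi
  rw [show m + t - 1 - (m + i) = t - 1 - i by omega, show m + t - t = m by omega]
  ring

lemma topSum_bottomRow_le_iff {k t : ℕ} {ζ ζ' : ℕ → ℕ} (hζ : Antitone ζ) (hζ' : Antitone ζ')
    (ht : t ≤ k) :
    topSum (bottomRow k ζ) t ≤ topSum (bottomRow k ζ') t ↔
      ∑ i ∈ range t, ζ i ≤ ∑ i ∈ range t, ζ' i := by
  rw [topSum_bottomRow hζ ht, topSum_bottomRow hζ' ht]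
  exact add_le_add_iff_right _

lemma sum_range_eq_of_eq_zero {η : ℕ → ℕ} {k j : ℕ} (hη : ∀ i, k ≤ i → η i = 0) (hkj : k ≤ j) :
    ∑ i ∈ range j, η i = ∑ i ∈ range k, η i :=
  (Finset.sum_subset (Finset.range_subset_range.2 hkj) fun i _ hi =>
    hη i (by simpa using hi)).symm

theorem stmt19_general (k : ℕ) (ξ' ζ ζ' : ℕ → ℕ)
    (hζ_dec : ∀ i, ζ (i + 1) ≤ ζ i) (hζ'_dec : ∀ i, ζ' (i + 1) ≤ ζ' i)
    (hζ_supp : ∀ i, k ≤ i → ζ i = 0) (hζ'_supp : ∀ i, k ≤ i → ζ' i = 0) :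
    (∀ r, topSum (usymbolEntries k ξ' ζ) r ≤ topSum (usymbolEntries k ξ' ζ') r) ↔
      (∀ j, ∑ i ∈ range j, ζ i ≤ ∑ i ∈ range j, ζ' i) := by
  set A := (Multiset.range (k + 1)).map (fun i => ξ' (k - i) + 2 * i)
  have hB := fun t (ht : t ≤ k) => topSum_bottomRow_le_iff
    (antitone_nat_of_succ_le hζ_dec) (antitone_nat_of_succ_le hζ'_dec) ht
  simp only [usymbolEntries_eq_add]
  constructor
  · intro htop
    have hdom : ∀ j ≤ k, ∑ i ∈ range j, ζ i ≤ ∑ i ∈ range j, ζ' i := by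
      intro j hj
      obtain ⟨s, hs⟩ := exists_topSum_add_eq A (bottomRow k ζ') (t := j)
        (by rwa [card_bottomRow])
      have := (topSum_add_le A (bottomRow k ζ) s j).trans ((htop _).trans hs.le)
      exact (hB j hj).1 (by omega)
    intro j
    rcases le_total j k with hj | hkj
    · exact hdom j hj
    · rw [sum_range_eq_of_eq_zero hζ_supp hkj, sum_range_eq_of_eq_zero hζ'_supp hkj]
      exact hdom k le_rfl
  · intro hdom r
    obtain ⟨s, t, ht, hst, hsplit⟩ := exists_topSum_add_le A (bottomRow k ζ) r
    rw [card_bottomRow] at ht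
    calc topSum (A + bottomRow k ζ) r ≤ topSum A s + topSum (bottomRow k ζ) t := hsplit
      _ ≤ topSum A s + topSum (bottomRow k ζ') t := by gcongr; exact (hB t ht).2 (hdom t)
      _ ≤ topSum (A + bottomRow k ζ') (s + t) := topSum_add_le _ _ _ _
      _ ≤ topSum (A + bottomRow k ζ') r := topSum_mono _ hst

/-- with γ, γ' the decreasingly ordered entry multisets of the
distinguished u-symbols attached to (ξ',ζ) and (ξ',ζ'), one has
γ_1 + ⋯ + γ_r ≤ γ'_1 + ⋯ + γ'_r for all r iff ζ ≤ ζ' in dominance order. -/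
theorem stmt19 (k : ℕ) (ξ' ζ ζ' : ℕ → ℕ)
    (hξ'_dec : ∀ i, ξ' (i + 1) ≤ ξ' i)
    (hζ_dec : ∀ i, ζ (i + 1) ≤ ζ i) (hζ'_dec : ∀ i, ζ' (i + 1) ≤ ζ' i)
    (hξ'_supp : ∀ i, k + 1 ≤ i → ξ' i = 0)
    (hζ_supp : ∀ i, k ≤ i → ζ i = 0) (hζ'_supp : ∀ i, k ≤ i → ζ' i = 0)
    (hsize : ∑ i ∈ range k, ζ i = ∑ i ∈ range k, ζ' i) :
    (∀ r, topSum (usymbolEntries k ξ' ζ) r ≤ topSum (usymbolEntries k ξ' ζ') r) ↔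
      (∀ j, ∑ i ∈ range j, ζ i ≤ ∑ i ∈ range j, ζ' i) :=
  stmt19_general k ξ' ζ ζ' hζ_dec hζ'_dec hζ_supp hζ'_supp
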